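/- (Multiple robustness, model M2.) Let the outcome-type nuisances δ*, φ, w, e_{10} be evaluated at their true values, and let p̃_z, π̃_z be arbitrary functions on 𝒳 with values in (0,1) satisfying p̃_1(x)≠p̃_0(x) for all x; set ρ̃ := p̃_1π̃_1 + p̃_0π̃_0. Define θ̃(O) = [ρ̃(X)/(p̃_1(X)−p̃_0(X))]·[(2Z−1)/π̃_Z(X)]·{Y − Aδ*(X) − Zφ(X) − w(X) − (A/p̃_Z(X))·(Y − Zφ(X) − e_{10}(X))}. Then E[A(δ*(X) − δ*_m) + θ̃(O)] = 0. -/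

import Mathlib

open MeasureTheory

/-- The probability of an event, as a real number. -/
noncomputable def prb {Ω : Type*} [MeasurableSpace Ω] (P : Measure Ω) (s : Set Ω) : ℝ :=
  (P s).toReal

/-- Conditional probability `P(s | t)` as a real number. -/
noncomputable def cprb {Ω : Type*} [MeasurableSpace Ω] (P : Measure Ω) (s t : Set Ω) : ℝ :=
  prb P (s ∩ t) / prb P t

/-- Conditional expectation `E[Y | t]` as a real number. -/
noncomputable def cex {Ω : Type*} [MeasurableSpace Ω] (P : Measure Ω) (Y : Ω → ℝ)
    (t : Set Ω) : ℝ :=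
  (∫ ω in t, Y ω ∂P) / prb P t

/-- A `{0,1}`-valued variable as a real number. -/
noncomputable def b2r (b : Bool) : ℝ := if b then 1 else 0



section Aux
variable {Ω : Type*} [MeasurableSpace Ω] {P : Measure Ω} [IsProbabilityMeasure P]

lemma aux_meas_comp {α : Type*} [Countable α] [MeasurableSpace α] [MeasurableSingletonClass α]
    (g : α → ℝ) {T : Ω → α} (hT : Measurable T) : Measurable fun ω => g (T ω) :=
  (measurable_of_countable g).comp hT

lemma aux_bdd {α : Type*} [Fintype α] (g : α → ℝ) : ∃ C, ∀ a, ‖g a‖ ≤ C :=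
  ⟨∑ a, ‖g a‖, fun a => Finset.single_le_sum (fun a _ => norm_nonneg (g a)) (Finset.mem_univ a)⟩

lemma integrable_comp_fin {α : Type*} [Fintype α] [MeasurableSpace α] [MeasurableSingletonClass α]
    (d : α → ℝ) {T : Ω → α} (hT : Measurable T) : Integrable (fun ω => d (T ω)) P := by
  obtain ⟨C, hC⟩ := aux_bdd d
  exact (integrable_const C).mono' (aux_meas_comp d hT).aestronglyMeasurable
    (ae_of_all _ fun ω => by simpa using hC (T ω))

lemma aux_integrable {α : Type*} [Fintype α] [MeasurableSpace α] [MeasurableSingletonClass α]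
    {Y : Ω → ℝ} (hYint : Integrable Y P)
    (c d : α → ℝ) {T : Ω → α} (hT : Measurable T) :
    Integrable (fun ω => c (T ω) * Y ω + d (T ω)) P := by
  obtain ⟨C, hC⟩ := aux_bdd c
  exact (hYint.bdd_mul (aux_meas_comp c hT).aestronglyMeasurable
    (ae_of_all _ fun ω => hC (T ω))).add (integrable_comp_fin d hT)

lemma integrable_b2r_mul {A : Ω → Bool} (hA : Measurable A) {g : Ω → ℝ} (hg : Integrable g P) :
    Integrable (fun ω => b2r (A ω) * g ω) P :=
  hg.bdd_mul (aux_meas_comp b2r hA).aestronglyMeasurable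
    (c := 1) (ae_of_all _ fun ω => by by_cases h : A ω <;> simp [b2r, h])

lemma setIntegral_b2r_mul {A : Ω → Bool} (hA : Measurable A) (g : Ω → ℝ) (s : Set Ω) :
    ∫ ω in s, b2r (A ω) * g ω ∂P = ∫ ω in s ∩ {ω | A ω = true}, g ω ∂P := by
  have h1 : (fun ω => b2r (A ω) * g ω) = fun ω => ({ω | A ω = true}).indicator g ω := by
    funext ω; by_cases h : A ω <;> simp [b2r, Set.indicator_apply, h]
  have hA' : MeasurableSet {ω | A ω = true} := hA (measurableSet_singleton true)
  rw [h1]; exact setIntegral_indicator hA'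

lemma integral_split_fin {α : Type*} [Fintype α] [MeasurableSpace α] [MeasurableSingletonClass α]
    {T : Ω → α} (hT : Measurable T) {f : Ω → ℝ} (hf : Integrable f P) :
    ∫ ω, f ω ∂P = ∑ a : α, ∫ ω in {ω | T ω = a}, f ω ∂P := by
  have hmeas : ∀ a : α, MeasurableSet {ω | T ω = a} := fun a => hT (measurableSet_singleton a)
  have key : ∀ ω, f ω = ∑ a : α, ({ω' | T ω' = a}).indicator f ω := by
    intro ω
    rw [Finset.sum_eq_single (T ω)]
    · exact (Set.indicator_of_mem (show ω ∈ {ω' | T ω' = T ω} from rfl) f).symm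
    · intro b _ hb
      exact Set.indicator_of_notMem (show ω ∉ {ω' | T ω' = b} from fun h => hb (Eq.symm h)) f
    · intro h; exact absurd (Finset.mem_univ _) h
  calc ∫ ω, f ω ∂P = ∫ ω, ∑ a : α, ({ω' | T ω' = a}).indicator f ω ∂P :=
        integral_congr_ae (ae_of_all _ key)
    _ = ∑ a : α, ∫ ω, ({ω' | T ω' = a}).indicator f ω ∂P :=
        integral_finset_sum _ (fun a _ => hf.indicator (hmeas a))
    _ = ∑ a : α, ∫ ω in {ω' | T ω' = a}, f ω ∂P :=
        Finset.sum_congr rfl fun a _ => integral_indicator (hmeas a)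

end Aux
lemma setIntegral_const_prb {Ω : Type*} [MeasurableSpace Ω] {P : Measure Ω}
    [IsProbabilityMeasure P] (c : ℝ) (s : Set Ω) :
    ∫ _ω in s, c ∂P = c * prb P s := by
  rw [setIntegral_const, smul_eq_mul, mul_comm]; rfl


/-- Multiple robustness, model M2: with the true outcome-type
nuisances `δ*`, `φ`, `w`, `e₁₀` and arbitrary propensity-type nuisances
`p̃_z`, `π̃_z ∈ (0,1)` with `p̃₁ ≠ p̃₀`, the plug-in influence function remains an
unbiased moment equation for `δ*_m`. -/
theorem multiple_robustness_M2
    {Ω 𝒳 : Type*} [MeasurableSpace Ω]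
    [Fintype 𝒳] [MeasurableSpace 𝒳] [MeasurableSingletonClass 𝒳]
    (P : Measure Ω) [IsProbabilityMeasure P]
    (Y : Ω → ℝ) (A Z : Ω → Bool) (X : Ω → 𝒳)
    (hY : Measurable Y) (hA : Measurable A) (hZ : Measurable Z) (hX : Measurable X)
    (hYint : Integrable Y P)
    -- positivity
    (hXpos : ∀ x, 0 < prb P {ω | X ω = x})
    (hApos : 0 < prb P {ω | A ω = true})
    -- nuisance functions
    (p π : Bool → 𝒳 → ℝ)
    (hp : ∀ z x, p z x = cprb P {ω | A ω = true} {ω | Z ω = z ∧ X ω = x})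
    (hπ : ∀ z x, π z x = cprb P {ω | Z ω = z} {ω | X ω = x})
    (hppos : ∀ z x, 0 < p z x ∧ p z x < 1)
    (hπpos : ∀ z x, 0 < π z x ∧ π z x < 1)
    -- relevance
    (hrel : ∀ x, p true x ≠ p false x)
    (e : Bool → 𝒳 → ℝ)
    (he : ∀ z x, e z x = cex P Y {ω | Z ω = z ∧ X ω = x})
    (e1z : Bool → 𝒳 → ℝ)
    (he1z : ∀ z x, e1z z x = cex P Y {ω | A ω = true ∧ Z ω = z ∧ X ω = x})
    (φ : 𝒳 → ℝ) (hφ : ∀ x, φ x = e1z true x - e1z false x)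
    (δs : 𝒳 → ℝ)
    (hδs : ∀ x, δs x = (e true x - e false x) / (p true x - p false x)
      - φ x / (p true x - p false x))
    (w : 𝒳 → ℝ)
    (hw : ∀ x, w x = cex P (fun ω => Y ω - b2r (A ω) * δs (X ω) - b2r (Z ω) * φ (X ω))
      {ω | X ω = x})
    (δm : ℝ) (hδm : δm = cex P (fun ω => δs (X ω)) {ω | A ω = true})
    -- arbitrary propensity-type nuisances
    (pt πt : Bool → 𝒳 → ℝ)
    (hptr : ∀ z x, 0 < pt z x ∧ pt z x < 1)
    (hπtr : ∀ z x, 0 < πt z x ∧ πt z x < 1)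
    (hptrel : ∀ x, pt true x ≠ pt false x)
    (ρt : 𝒳 → ℝ)
    (hρt : ∀ x, ρt x = pt true x * πt true x + pt false x * πt false x)
    (θt : Ω → ℝ)
    (hθt : ∀ ω, θt ω =
      ρt (X ω) / (pt true (X ω) - pt false (X ω))
        * ((2 * b2r (Z ω) - 1) / πt (Z ω) (X ω))
        * (Y ω - b2r (A ω) * δs (X ω) - b2r (Z ω) * φ (X ω) - w (X ω)
            - b2r (A ω) / pt (Z ω) (X ω)
              * (Y ω - b2r (Z ω) * φ (X ω) - e1z false (X ω)))) :
    ∫ ω, (b2r (A ω) * (δs (X ω) - δm) + θt ω) ∂P = 0 := by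
  -- measurable sets
  have hMcell : ∀ (z : Bool) (x : 𝒳), MeasurableSet {ω | Z ω = z ∧ X ω = x} := by
    intro z x
    have h1 : MeasurableSet {ω | Z ω = z} := hZ (measurableSet_singleton z)
    have h2 : MeasurableSet {ω | X ω = x} := hX (measurableSet_singleton x)
    have h3 : {ω | Z ω = z ∧ X ω = x} = {ω | Z ω = z} ∩ {ω | X ω = x} := rfl
    rw [h3]; exact h1.inter h2
  have hPXne : ∀ x, prb P {ω | X ω = x} ≠ 0 := fun x => ne_of_gt (hXpos x)
  have hπcell : ∀ (z : Bool) (x : 𝒳),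
      prb P {ω | Z ω = z ∧ X ω = x} = π z x * prb P {ω | X ω = x} := by
    intro z x
    rw [hπ z x]; unfold cprb
    rw [show {ω | Z ω = z} ∩ {ω | X ω = x} = {ω | Z ω = z ∧ X ω = x} from rfl,
      div_mul_cancel₀ _ (hPXne x)]
  have hPcell : ∀ (z : Bool) (x : 𝒳), 0 < prb P {ω | Z ω = z ∧ X ω = x} := by
    intro z x; rw [hπcell]; exact mul_pos (hπpos z x).1 (hXpos x)
  have hPcellne : ∀ z x, prb P {ω | Z ω = z ∧ X ω = x} ≠ 0 := fun z x => ne_of_gt (hPcell z x)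
  have hPac : ∀ (z : Bool) (x : 𝒳),
      prb P ({ω | Z ω = z ∧ X ω = x} ∩ {ω | A ω = true})
        = p z x * prb P {ω | Z ω = z ∧ X ω = x} := by
    intro z x
    rw [Set.inter_comm, hp z x]; unfold cprb
    rw [div_mul_cancel₀ _ (hPcellne z x)]
  have hPacne : ∀ z x, prb P ({ω | Z ω = z ∧ X ω = x} ∩ {ω | A ω = true}) ≠ 0 := by
    intro z x; rw [hPac]; exact ne_of_gt (mul_pos (hppos z x).1 (hPcell z x))
  -- cell integrals of Y
  have hIY : ∀ (z : Bool) (x : 𝒳), ∫ ω in {ω | Z ω = z ∧ X ω = x}, Y ω ∂P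
      = e z x * prb P {ω | Z ω = z ∧ X ω = x} := by
    intro z x; rw [he z x]; unfold cex; rw [div_mul_cancel₀ _ (hPcellne z x)]
  have hseteqA : ∀ (z : Bool) (x : 𝒳),
      {ω | A ω = true ∧ Z ω = z ∧ X ω = x}
        = {ω | Z ω = z ∧ X ω = x} ∩ {ω | A ω = true} := by
    intro z x; ext ω; simp only [Set.mem_inter_iff, Set.mem_setOf_eq]; tauto
  have hIYA : ∀ (z : Bool) (x : 𝒳),
      ∫ ω in {ω | Z ω = z ∧ X ω = x} ∩ {ω | A ω = true}, Y ω ∂P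
      = e1z z x * prb P ({ω | Z ω = z ∧ X ω = x} ∩ {ω | A ω = true}) := by
    intro z x; rw [he1z z x, hseteqA z x]; unfold cex
    rw [div_mul_cancel₀ _ (hPacne z x)]
  have hTm : Measurable fun ω => (A ω, Z ω, X ω) := hA.prodMk (hZ.prodMk hX)
  -- integrability of the w-integrand
  have hgint : Integrable (fun ω => Y ω - b2r (A ω) * δs (X ω) - b2r (Z ω) * φ (X ω)) P := by
    have h := aux_integrable hYint (fun _ : Bool × Bool × 𝒳 => (1:ℝ))
      (fun q : Bool × Bool × 𝒳 => - (b2r q.1 * δs q.2.2) - b2r q.2.1 * φ q.2.2) hTm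
    exact h.congr (ae_of_all _ fun ω => by ring)
  -- cell integrals of the w-integrand
  have hIg : ∀ (z : Bool) (x : 𝒳),
      ∫ ω in {ω | Z ω = z ∧ X ω = x},
        (Y ω - b2r (A ω) * δs (X ω) - b2r (Z ω) * φ (X ω)) ∂P
      = (e z x - p z x * δs x - b2r z * φ x) * prb P {ω | Z ω = z ∧ X ω = x} := by
    intro z x
    have hEq : Set.EqOn (fun ω => Y ω - b2r (A ω) * δs (X ω) - b2r (Z ω) * φ (X ω))
        (fun ω => Y ω - b2r (A ω) * δs x - b2r z * φ x) {ω | Z ω = z ∧ X ω = x} := by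
      intro ω hω
      have h1 : Z ω = z := hω.1
      have h2 : X ω = x := hω.2
      simp only [h1, h2]
    rw [setIntegral_congr_fun (hMcell z x) hEq]
    have i1 : IntegrableOn Y {ω | Z ω = z ∧ X ω = x} P := hYint.integrableOn
    have i2 : IntegrableOn (fun ω => b2r (A ω) * δs x) {ω | Z ω = z ∧ X ω = x} P :=
      (integrable_b2r_mul hA (integrable_const _)).integrableOn
    have i3 : IntegrableOn (fun _ => b2r z * φ x) {ω | Z ω = z ∧ X ω = x} P :=
      (integrable_const _).integrableOn
    have i12 : IntegrableOn (fun ω => Y ω - b2r (A ω) * δs x) {ω | Z ω = z ∧ X ω = x} P :=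
      i1.sub i2
    rw [integral_sub i12 i3, integral_sub i1 i2, hIY z x,
      setIntegral_b2r_mul hA, setIntegral_const_prb, setIntegral_const_prb, hPac z x]
    ring
  -- pi sums to one
  have hdecomp : ∀ x : 𝒳, {ω | X ω = x}
      = {ω | Z ω = true ∧ X ω = x} ∪ {ω | Z ω = false ∧ X ω = x} := by
    intro x; ext ω; by_cases h : Z ω <;> simp [h]
  have hdisj : ∀ x : 𝒳,
      Disjoint {ω | Z ω = true ∧ X ω = x} {ω | Z ω = false ∧ X ω = x} := by
    intro x
    rw [Set.disjoint_left]
    rintro ω ⟨h1, -⟩ ⟨h2, -⟩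
    rw [h1] at h2; exact Bool.noConfusion h2
  have hπsum : ∀ x : 𝒳, π true x + π false x = 1 := by
    intro x
    have hadd : prb P {ω | X ω = x} = prb P {ω | Z ω = true ∧ X ω = x}
        + prb P {ω | Z ω = false ∧ X ω = x} := by
      unfold prb
      rw [hdecomp x, measure_union (hdisj x) (hMcell false x),
        ENNReal.toReal_add (measure_ne_top _ _) (measure_ne_top _ _)]
    rw [hπcell true x, hπcell false x] at hadd
    have h2 : (π true x + π false x) * prb P {ω | X ω = x}
        = 1 * prb P {ω | X ω = x} := by linarith
    exact mul_right_cancel₀ (hPXne x) h2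
  -- w formula
  have hwid : ∀ x : 𝒳, w x = π true x * (e true x - p true x * δs x - φ x)
      + π false x * (e false x - p false x * δs x) := by
    intro x
    have h1 : w x * prb P {ω | X ω = x}
        = ∫ ω in {ω | X ω = x}, (Y ω - b2r (A ω) * δs (X ω) - b2r (Z ω) * φ (X ω)) ∂P := by
      rw [hw x]; unfold cex; rw [div_mul_cancel₀ _ (hPXne x)]
    have h2 : ∫ ω in {ω | X ω = x},
        (Y ω - b2r (A ω) * δs (X ω) - b2r (Z ω) * φ (X ω)) ∂P
        = (∫ ω in {ω | Z ω = true ∧ X ω = x},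
            (Y ω - b2r (A ω) * δs (X ω) - b2r (Z ω) * φ (X ω)) ∂P)
          + ∫ ω in {ω | Z ω = false ∧ X ω = x},
            (Y ω - b2r (A ω) * δs (X ω) - b2r (Z ω) * φ (X ω)) ∂P := by
      rw [hdecomp x]
      exact setIntegral_union (hdisj x) (hMcell false x)
        hgint.integrableOn hgint.integrableOn
    rw [h2, hIg true x, hIg false x, hπcell true x, hπcell false x] at h1
    refine mul_right_cancel₀ (hPXne x) ?_
    rw [h1]; simp only [b2r, Bool.false_eq_true, if_false, if_true]; ring
  -- main identity
  have hmain : ∀ (z : Bool) (x : 𝒳), e z x - p z x * δs x - b2r z * φ x - w x = 0 := by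
    intro z x
    have hΔ : p true x - p false x ≠ 0 := sub_ne_zero.mpr (hrel x)
    have hδ' : δs x * (p true x - p false x) = e true x - e false x - φ x := by
      rw [hδs x]; field_simp
    have hab : e true x - p true x * δs x - φ x = e false x - p false x * δs x := by
      linear_combination -hδ'
    have hwv : w x = e false x - p false x * δs x := by
      rw [hwid x, hab]
      linear_combination (e false x - p false x * δs x) * hπsum x
    cases z
    · simp only [b2r, Bool.false_eq_true, if_false]
      linarith [hwv]
    · simp only [b2r, if_true]
      linarith [hab, hwv]
  -- phi identity
  have hφ0 : ∀ (z : Bool) (x : 𝒳), e1z z x = b2r z * φ x + e1z false x := by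
    intro z x
    cases z
    · simp [b2r]
    · simp only [b2r, if_true, hφ x]; ring
  -- per-cell integral of θt is zero
  have hcellθ : ∀ (z : Bool) (x : 𝒳), ∫ ω in {ω | Z ω = z ∧ X ω = x}, θt ω ∂P = 0 := by
    intro z x
    have hEq : Set.EqOn θt (fun ω =>
        (ρt x / (pt true x - pt false x) * ((2 * b2r z - 1) / πt z x)) *
        (Y ω - b2r (A ω) * δs x - (b2r z * φ x + w x)
          - (1 / pt z x) * (b2r (A ω) * (Y ω - (b2r z * φ x + e1z false x)))))
        {ω | Z ω = z ∧ X ω = x} := by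
      intro ω hω
      have h1 : Z ω = z := hω.1
      have h2 : X ω = x := hω.2
      simp only [hθt ω, h1, h2]
      ring
    rw [setIntegral_congr_fun (hMcell z x) hEq, integral_const_mul]
    have i1 : IntegrableOn Y {ω | Z ω = z ∧ X ω = x} P := hYint.integrableOn
    have i2 : IntegrableOn (fun ω => b2r (A ω) * δs x) {ω | Z ω = z ∧ X ω = x} P :=
      (integrable_b2r_mul hA (integrable_const _)).integrableOn
    have i3 : IntegrableOn (fun _ => b2r z * φ x + w x) {ω | Z ω = z ∧ X ω = x} P :=
      (integrable_const _).integrableOn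
    have i4 : IntegrableOn (fun ω => (1 / pt z x)
        * (b2r (A ω) * (Y ω - (b2r z * φ x + e1z false x)))) {ω | Z ω = z ∧ X ω = x} P :=
      ((integrable_b2r_mul hA (hYint.sub (integrable_const _))).const_mul _).integrableOn
    have i12 : IntegrableOn (fun ω => Y ω - b2r (A ω) * δs x) {ω | Z ω = z ∧ X ω = x} P :=
      i1.sub i2
    have i123 : IntegrableOn (fun ω => Y ω - b2r (A ω) * δs x - (b2r z * φ x + w x))
        {ω | Z ω = z ∧ X ω = x} P := i12.sub i3
    rw [integral_sub i123 i4, integral_sub i12 i3,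
      integral_sub i1 i2, integral_const_mul, setIntegral_b2r_mul hA, setIntegral_b2r_mul hA,
      integral_sub hYint.integrableOn (integrable_const _).integrableOn,
      hIY z x, hIYA z x, setIntegral_const_prb, setIntegral_const_prb,
      setIntegral_const_prb, hPac z x]
    have hw0 : e z x = p z x * δs x + b2r z * φ x + w x := by linarith [hmain z x]
    rw [hw0, hφ0 z x]
    ring
  -- part A
  have hpartA : ∫ ω, b2r (A ω) * (δs (X ω) - δm) ∂P = 0 := by
    rw [← setIntegral_univ (μ := P), setIntegral_b2r_mul hA, Set.univ_inter,
      integral_sub (integrable_comp_fin δs hX).integrableOn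
        (integrable_const _).integrableOn,
      setIntegral_const_prb, hδm]
    unfold cex
    rw [div_mul_cancel₀ _ (ne_of_gt hApos), sub_self]
  -- integrability of θt
  have hθint : Integrable θt P := by
    have h := aux_integrable hYint
      (fun q : Bool × Bool × 𝒳 => ρt q.2.2 / (pt true q.2.2 - pt false q.2.2)
        * ((2 * b2r q.2.1 - 1) / πt q.2.1 q.2.2) * (1 - b2r q.1 / pt q.2.1 q.2.2))
      (fun q : Bool × Bool × 𝒳 => ρt q.2.2 / (pt true q.2.2 - pt false q.2.2)
        * ((2 * b2r q.2.1 - 1) / πt q.2.1 q.2.2)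
        * (- (b2r q.1 * δs q.2.2) - b2r q.2.1 * φ q.2.2 - w q.2.2
            + b2r q.1 / pt q.2.1 q.2.2 * (b2r q.2.1 * φ q.2.2 + e1z false q.2.2)))
      hTm
    exact h.congr (ae_of_all _ fun ω => by rw [hθt ω]; ring)
  have hFint : Integrable (fun ω => b2r (A ω) * (δs (X ω) - δm)) P :=
    integrable_b2r_mul hA ((integrable_comp_fin δs hX).sub (integrable_const δm))
  rw [integral_add hFint hθint, hpartA, zero_add,
    integral_split_fin (hZ.prodMk hX) hθint]
  refine Finset.sum_eq_zero fun q _ => ?_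
  have hsq : {ω | (Z ω, X ω) = q} = {ω | Z ω = q.1 ∧ X ω = q.2} := by
    ext ω; simp [Prod.ext_iff]
  rw [hsq]
  exact hcellθ q.1 q.2
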